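/- Let P^⊥ be the parameter subspace of a PLP system with basis {v_1, ..., v_k}, and E+ = {x ∈ R^n_{>0} : log x - log x* ∈ P^⊥}. The system has ACR in coordinate i (all elements of E+ share the same i-th coordinate) if and only if the i-th coordinate of every basis vector v_j is zero. -/

import Mathlib

open Real Set Submodule

theorem forall_mem_span_range_eq_zero_iff {R M N κ : Type*} [Semiring R] [AddCommMonoid M]
    [Module R M] [AddCommMonoid N] [Module R N] (f : M →ₗ[R] N) (v : κ → M) :
    (∀ q ∈ span R (range v), f q = 0) ↔ ∀ j, f (v j) = 0 := by
  simpa [SetLike.le_def, range_subset_iff] using span_le (s := range v) (p := LinearMap.ker f)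

variable {ι : Type*}

/-- The set `E₊` of the paper. -/
def posLogCoset (Q : Submodule ℝ (EuclideanSpace ℝ ι)) (xs : EuclideanSpace ℝ ι) :
    Set (EuclideanSpace ℝ ι) :=
  {x | (∀ i, 0 < x i) ∧
    (WithLp.toLp 2 (fun i => Real.log (x i) - Real.log (xs i)) : EuclideanSpace ℝ ι) ∈ Q}

variable {Q : Submodule ℝ (EuclideanSpace ℝ ι)} {xs : EuclideanSpace ℝ ι}

theorem mul_exp_mem_posLogCoset (hxs : ∀ i, 0 < xs i) {q : EuclideanSpace ℝ ι} (hq : q ∈ Q) :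
    WithLp.toLp 2 (fun i => xs i * exp (q i)) ∈ posLogCoset Q xs := by
  refine ⟨fun i => mul_pos (hxs i) (exp_pos _), ?_⟩
  convert hq with i
  simp [log_mul (hxs i).ne' (exp_pos _).ne']

theorem mem_posLogCoset_self (hxs : ∀ i, 0 < xs i) : xs ∈ posLogCoset Q xs := by
  simpa using mul_exp_mem_posLogCoset hxs Q.zero_mem

theorem apply_eq_of_mem_posLogCoset (hxs : ∀ i, 0 < xs i) {i : ι} (hQ : ∀ q ∈ Q, q i = 0)
    {x : EuclideanSpace ℝ ι} (hx : x ∈ posLogCoset Q xs) : x i = xs i :=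
  log_injOn_pos (hx.1 i) (hxs i) (sub_eq_zero.mp (hQ _ hx.2))

/-- `q ↦ xs * exp q` maps `Q` onto `posLogCoset Q xs`. -/
theorem apply_const_on_posLogCoset_iff (hxs : ∀ i, 0 < xs i) (i : ι) :
    (∀ x ∈ posLogCoset Q xs, ∀ y ∈ posLogCoset Q xs, x i = y i) ↔ ∀ q ∈ Q, q i = 0 := by
  constructor
  · intro hconst q hq
    have h := hconst _ (mul_exp_mem_posLogCoset hxs hq) xs (mem_posLogCoset_self hxs)
    simpa [(hxs i).ne'] using h
  · intro hQ x hx y hy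
    rw [apply_eq_of_mem_posLogCoset hxs hQ hx, apply_eq_of_mem_posLogCoset hxs hQ hy]

theorem plp_acr_iff_basis_coordinates_zero_general
    {n k : ℕ} (Q : Submodule ℝ (EuclideanSpace ℝ (Fin n)))
    (v : Fin k → EuclideanSpace ℝ (Fin n))
    (hspan : Q = Submodule.span ℝ (Set.range v))
    (xs : EuclideanSpace ℝ (Fin n)) (hxs : ∀ i, 0 < xs i)
    (E : Set (EuclideanSpace ℝ (Fin n)))
    (hE : E = {x | (∀ i, 0 < x i) ∧
      (WithLp.toLp 2 (fun i => Real.log (x i) - Real.log (xs i)) : EuclideanSpace ℝ (Fin n)) ∈ Q})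
    (i : Fin n) :
    (∀ x ∈ E, ∀ y ∈ E, x i = y i) ↔ ∀ j, v j i = 0 := by
  subst hE hspan
  exact (apply_const_on_posLogCoset_iff hxs i).trans
    (forall_mem_span_range_eq_zero_iff (EuclideanSpace.proj (𝕜 := ℝ) i).toLinearMap v)

/-- For a PLP system whose parameter subspace `Q = Pᗮ` has basis
`v 1, ..., v k`, the system has ACR in coordinate `i` iff the `i`-th coordinate
of every basis vector is zero. -/
theorem plp_acr_iff_basis_coordinates_zero
    {n k : ℕ} (Q : Submodule ℝ (EuclideanSpace ℝ (Fin n)))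
    (v : Fin k → EuclideanSpace ℝ (Fin n))
    (hind : LinearIndependent ℝ v)
    (hspan : Q = Submodule.span ℝ (Set.range v))
    (xs : EuclideanSpace ℝ (Fin n)) (hxs : ∀ i, 0 < xs i)
    (E : Set (EuclideanSpace ℝ (Fin n)))
    (hE : E = {x | (∀ i, 0 < x i) ∧
      (WithLp.toLp 2 (fun i => Real.log (x i) - Real.log (xs i)) : EuclideanSpace ℝ (Fin n)) ∈ Q})
    (i : Fin n) :
    (∀ x ∈ E, ∀ y ∈ E, x i = y i) ↔ ∀ j, v j i = 0 :=
  plp_acr_iff_basis_coordinates_zero_general Q v hspan xs hxs E hE i
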